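/- For a partition λ inside an n×m board and an outer corner cell e of λ, the q-hit numbers satisfy the deletion-contraction relation: H_j^{m,n}(λ) = H_j^{m,n}(λ∖e) + q^{|λ/e|−|λ|+j+m−1}·( H_{j−1}^{m−1,n−1}(λ/e) − q·H_j^{m−1,n−1}(λ/e) ), where λ∖e deletes the cell e and λ/e deletes the row and column containing e. -/
import Mathlib


open Finset

noncomputable section
open scoped Classical

variable {K : Type*} [Field K]

/-- The `q`-integer `[x] = (1 - q^x)/(1 - q)` for an integer `x`. -/
def qInt (q : K) (x : ℤ) : K := (1 - q ^ x) / (1 - q)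

/-- The falling `q`-factorial `[x]_j = [x][x-1]⋯[x-j+1]`. -/
def qFall (q : K) (x : ℤ) (j : ℕ) : K := ∏ t ∈ Finset.range j, qInt q (x - t)

/-- The `q`-factorial `[n]! = [n]_n`. -/
def qFact (q : K) (n : ℕ) : K := qFall q (n : ℤ) n

/-- The Gaussian (`q`-)binomial coefficient `[a]!/([b]! [a-b]!)`. -/
def qBinom (q : K) (a b : ℕ) : K := qFact q a / (qFact q b * qFact q (a - b))

/-- The cells of the Ferrers board of `lam` (1-indexed rows `1,…,ℓ`):
cell `(i,j)` with `1 ≤ i ≤ ℓ` and `1 ≤ j ≤ lam i`. -/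
def board (lam : ℕ → ℕ) (ℓ : ℕ) : Finset (ℕ × ℕ) :=
  ((Finset.Icc 1 ℓ) ×ˢ (Finset.Icc 1 ((Finset.Icc 1 ℓ).sup lam))).filter
    (fun c => c.2 ≤ lam c.1)

/-- Placements of `k` non-attacking rooks on the Ferrers board of `lam`. -/
def placements (lam : ℕ → ℕ) (ℓ k : ℕ) : Finset (Finset (ℕ × ℕ)) :=
  (board lam ℓ).powerset.filter
    (fun p => p.card = k ∧ ∀ a ∈ p, ∀ b ∈ p, a ≠ b → a.1 ≠ b.1 ∧ a.2 ≠ b.2)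

/-- The Garsia–Remmel inversion statistic of a rook placement `p`: the number of
cells of the board that are not occupied by a rook and not directly west
(same row, with a rook strictly to the east) or north (same column, with a rook
strictly to the south) of a rook. -/
def rInv (lam : ℕ → ℕ) (ℓ : ℕ) (p : Finset (ℕ × ℕ)) : ℕ :=
  ((board lam ℓ).filter (fun c => c ∉ p ∧
      (∀ r ∈ p, r.1 = c.1 → r.2 < c.2) ∧
      (∀ r ∈ p, r.2 = c.2 → r.1 < c.1))).card

/-- The Garsia–Remmel `q`-rook number `R_k(λ) = ∑_p q^{inv(p)}`. -/
def qRook (q : K) (lam : ℕ → ℕ) (ℓ k : ℕ) : K :=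
  ∑ p ∈ placements lam ℓ k, q ^ rInv lam ℓ p

/-- The size `|λ| = λ_1 + ⋯ + λ_ℓ`. -/
def pSize (lam : ℕ → ℕ) (ℓ : ℕ) : ℕ := ∑ i ∈ Finset.Icc 1 ℓ, lam i

/-- The `q`-hit numbers `H_k^{m,n}(λ)` of `λ ⊆ n×m`, defined from the `q`-rook
numbers by the change of basis
`H_k^{m,n}(λ) = (q^{C(k,2)-|λ|}/[m-n]!) ∑_{i=k}^{n} R_i(λ) [m-i]! qbinom(i,k) (-1)^{i+k} q^{mi-C(i,2)}`. -/
def qHit (q : K) (m n : ℕ) (lam : ℕ → ℕ) (ℓ k : ℕ) : K :=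
  (q ^ ((k.choose 2 : ℤ) - (pSize lam ℓ : ℤ)) / qFact q (m - n)) *
    ∑ i ∈ Finset.Icc k n, qRook q lam ℓ i * qFact q (m - i) * qBinom q i k *
      (-1 : K) ^ (i + k) * q ^ ((m : ℤ) * (i : ℤ) - (i.choose 2 : ℤ))

/-- `lam : ℕ → ℕ` is a partition with exactly `ℓ` (positive) parts `lam 1 ≥ ⋯ ≥ lam ℓ ≥ 1`. -/
def IsPartition (lam : ℕ → ℕ) (ℓ : ℕ) : Prop :=
  (∀ i j, 1 ≤ i → i ≤ j → lam j ≤ lam i) ∧ (∀ i, ℓ < i → lam i = 0) ∧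
    (∀ i, 1 ≤ i → i ≤ ℓ → 1 ≤ lam i)

/-- `lam` is a partition with `ℓ` parts contained in an `n × m` board. -/
def IsPartitionIn (lam : ℕ → ℕ) (ℓ n m : ℕ) : Prop :=
  IsPartition lam ℓ ∧ ℓ ≤ n ∧ lam 1 ≤ m

/-- The rectangular partition `a^b` (`b` parts equal to `a`). -/
def rect (a b : ℕ) : ℕ → ℕ := fun i => if 1 ≤ i ∧ i ≤ b then a else 0

/-- The partition obtained from `lam` by deleting its `j`-th column. -/
def delCol (lam : ℕ → ℕ) (j : ℕ) : ℕ → ℕ :=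
  fun r => if j ≤ lam r then lam r - 1 else lam r

/-- The partition obtained from `lam` by deleting its `i`-th row. -/
def delRow (lam : ℕ → ℕ) (i : ℕ) : ℕ → ℕ :=
  fun r => if r < i then lam r else lam (r + 1)

/-- The `j`-th column length `λ'_j` of `lam` (with `ℓ` rows). -/
def conjP (lam : ℕ → ℕ) (ℓ j : ℕ) : ℕ :=
  ((Finset.Icc 1 ℓ).filter (fun r => j ≤ lam r)).card

/-- The partition obtained from `lam` by deleting the corner cell in row `r`. -/
def delCell (lam : ℕ → ℕ) (r : ℕ) : ℕ → ℕ :=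
  fun i => if i = r then lam r - 1 else lam i


section Aux

variable (q : K)

lemma qFact_succ (n : ℕ) : qFact q (n + 1) = qFact q n * qInt q (((n + 1 : ℕ)) : ℤ) := by
  unfold qFact qFall
  rw [Finset.prod_range_succ']
  congr 1
  · apply Finset.prod_congr rfl
    intro t ht
    congr 1
    push_cast
    ring

lemma qFact_zero : qFact q 0 = 1 := by
  simp [qFact, qFall]

lemma qInt_natCast_ne_zero (hq0 : q ≠ 0) (hq1 : ∀ j : ℕ, 0 < j → q ^ j ≠ 1)
    (k : ℕ) (hk : 1 ≤ k) : qInt q (k : ℤ) ≠ 0 := by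
  unfold qInt
  rw [zpow_natCast]
  apply div_ne_zero
  · intro h
    exact hq1 k hk (sub_eq_zero.mp h).symm
  · intro h
    have := hq1 1 one_pos
    rw [pow_one] at this
    exact this (sub_eq_zero.mp h).symm

lemma qFact_ne_zero (hq0 : q ≠ 0) (hq1 : ∀ j : ℕ, 0 < j → q ^ j ≠ 1)
    (n : ℕ) : qFact q n ≠ 0 := by
  induction n with
  | zero => rw [qFact_zero]; exact one_ne_zero
  | succ n ih =>
      rw [qFact_succ]
      exact mul_ne_zero ih (qInt_natCast_ne_zero q hq0 hq1 (n+1) (Nat.le_add_left 1 n))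

lemma qBinom_self (hq0 : q ≠ 0) (hq1 : ∀ j : ℕ, 0 < j → q ^ j ≠ 1)
    (a : ℕ) : qBinom q a a = 1 := by
  unfold qBinom
  rw [Nat.sub_self, qFact_zero, mul_one, div_self (qFact_ne_zero q hq0 hq1 a)]

lemma qInt_add (a b : ℕ) : qInt q ((a + b : ℕ) : ℤ) = qInt q a + q ^ a * qInt q b := by
  unfold qInt
  rw [zpow_natCast, zpow_natCast, zpow_natCast, pow_add]
  ring

/-- q-Pascal identity. -/
lemma qBinom_pascal (hq0 : q ≠ 0) (hq1 : ∀ j : ℕ, 0 < j → q ^ j ≠ 1)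
    (i j : ℕ) (hj : 1 ≤ j) (hji : j ≤ i) :
    qBinom q (i+1) j = qBinom q i (j-1) + q ^ j * qBinom q i j := by
  obtain ⟨j, rfl⟩ := Nat.exists_eq_add_of_le hj
  obtain ⟨d, rfl⟩ := Nat.exists_eq_add_of_le hji
  have key : qInt q ((1 + j + d + 1 : ℕ) : ℤ)
      = qInt q ((1 + j : ℕ) : ℤ) + q ^ (1 + j) * qInt q ((d + 1 : ℕ) : ℤ) := by
    rw [← qInt_add]
    congr 1
  have h1 : (1 + j + d + 1) - (1 + j) = d + 1 := by omega
  have h2 : (1 + j + d) - (1 + j - 1) = d + 1 := by omega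
  have h3 : (1 + j) - 1 = j := by omega
  have h4 : (1 + j + d) - (1 + j) = d := by omega
  unfold qBinom
  rw [h1, h2, h3, h4]
  have hFj : qFact q j ≠ 0 := qFact_ne_zero q hq0 hq1 j
  have hFj1 : qFact q (1 + j) ≠ 0 := qFact_ne_zero q hq0 hq1 (1+j)
  have hFd : qFact q d ≠ 0 := qFact_ne_zero q hq0 hq1 d
  have hFd1 : qFact q (d + 1) ≠ 0 := qFact_ne_zero q hq0 hq1 (d+1)
  have e1 : qFact q (1 + j + d + 1) = qFact q (1 + j + d) * qInt q ((1 + j + d + 1 : ℕ) : ℤ) :=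
    qFact_succ q (1 + j + d)
  have e2 : qFact q (1 + j) = qFact q j * qInt q ((1 + j : ℕ) : ℤ) := by
    rw [add_comm 1 j, qFact_succ]
  have e3 : qFact q (d + 1) = qFact q d * qInt q ((d + 1 : ℕ) : ℤ) := qFact_succ q d
  have hIj : qInt q ((1 + j : ℕ) : ℤ) ≠ 0 :=
    qInt_natCast_ne_zero q hq0 hq1 (1+j) (Nat.le_add_right 1 j)
  have hId : qInt q ((d + 1 : ℕ) : ℤ) ≠ 0 :=
    qInt_natCast_ne_zero q hq0 hq1 (d+1) (Nat.le_add_left 1 d)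
  rw [e1, key, e2, e3]
  push_cast at hIj hId ⊢
  field_simp

lemma mem_board {lam : ℕ → ℕ} {ℓ : ℕ} {x : ℕ × ℕ} :
    x ∈ board lam ℓ ↔ 1 ≤ x.1 ∧ x.1 ≤ ℓ ∧ 1 ≤ x.2 ∧ x.2 ≤ lam x.1 := by
  unfold board
  simp only [Finset.mem_filter, Finset.mem_product, Finset.mem_Icc]
  constructor
  · rintro ⟨⟨⟨h1, h2⟩, h3, _⟩, h5⟩
    exact ⟨h1, h2, h3, h5⟩
  · rintro ⟨h1, h2, h3, h5⟩
    refine ⟨⟨⟨h1, h2⟩, h3, ?_⟩, h5⟩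
    exact le_trans h5 (Finset.le_sup (Finset.mem_Icc.mpr ⟨h1, h2⟩))

end Aux


section Shift

/-- shift down past `r` -/
def shDown (r x : ℕ) : ℕ := if x < r then x else x - 1

/-- shift up past `r` -/
def shUp (r x : ℕ) : ℕ := if x < r then x else x + 1

lemma shDown_shUp (r x : ℕ) : shDown r (shUp r x) = x := by
  simp only [shDown, shUp]; split_ifs <;> omega

lemma shUp_shDown {r x : ℕ} (h : x ≠ r) : shUp r (shDown r x) = x := by
  simp only [shDown, shUp]; split_ifs <;> omega

lemma shUp_ne (r x : ℕ) : shUp r x ≠ r := by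
  simp only [shUp]; split_ifs <;> omega

lemma shUp_inj {r x y : ℕ} (h : shUp r x = shUp r y) : x = y := by
  simp only [shUp] at h; split_ifs at h <;> omega

lemma shDown_lt_iff {r x y : ℕ} (hx : x ≠ r) (hy : y ≠ r) :
    shDown r x < shDown r y ↔ x < y := by
  simp only [shDown]; split_ifs <;> omega

/-- cell version -/
def cellUp (r c0 : ℕ) (x : ℕ × ℕ) : ℕ × ℕ := (shUp r x.1, shUp c0 x.2)

/-- cell version -/
def cellDown (r c0 : ℕ) (x : ℕ × ℕ) : ℕ × ℕ := (shDown r x.1, shDown c0 x.2)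

lemma cellDown_cellUp (r c0 : ℕ) (x : ℕ × ℕ) : cellDown r c0 (cellUp r c0 x) = x := by
  simp [cellDown, cellUp, shDown_shUp]

lemma cellUp_cellDown {r c0 : ℕ} {x : ℕ × ℕ} (h1 : x.1 ≠ r) (h2 : x.2 ≠ c0) :
    cellUp r c0 (cellDown r c0 x) = x := by
  simp [cellDown, cellUp, shUp_shDown h1, shUp_shDown h2]

lemma cellUp_injective (r c0 : ℕ) : Function.Injective (cellUp r c0) := by
  intro x y h
  simp only [cellUp, Prod.mk.injEq] at h
  exact Prod.ext (shUp_inj h.1) (shUp_inj h.2)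

end Shift

section RookDC

variable (q : K) (lam : ℕ → ℕ) (ℓ r : ℕ)

lemma board_delCell (hpos : 1 ≤ lam r) :
    board (delCell lam r) ℓ = (board lam ℓ).erase (r, lam r) := by
  ext ⟨i, c⟩
  simp only [mem_board, Finset.mem_erase, delCell, Prod.mk.injEq, Ne, not_and]
  by_cases h : i = r <;> simp [h] <;> omega

lemma mu_lt (hmono : ∀ i j, 1 ≤ i → i ≤ j → lam j ≤ lam i) {i : ℕ}
    (h1 : 1 ≤ i) (h2 : i < r) :
    delCol (delRow lam r) (lam r) i = lam i - 1 := by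
  have : lam r ≤ lam i := hmono i r h1 (le_of_lt h2)
  simp [delCol, delRow, h2, this]

lemma mu_ge (hmono : ∀ i j, 1 ≤ i → i ≤ j → lam j ≤ lam i) (hr1 : 1 ≤ r)
    (hcorner : lam (r + 1) < lam r) {i : ℕ} (h2 : r ≤ i) :
    delCol (delRow lam r) (lam r) i = lam (i + 1) := by
  have h3 : lam (i + 1) ≤ lam (r + 1) := hmono (r+1) (i+1) (by omega) (by omega)
  have : ¬ (lam r ≤ lam (i + 1)) := by omega
  simp [delCol, delRow, h2, not_lt_of_ge h2, this]

lemma mem_board_mu (hmono : ∀ i j, 1 ≤ i → i ≤ j → lam j ≤ lam i) (hr1 : 1 ≤ r)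
    (hrℓ : r ≤ ℓ) (hcorner : lam (r + 1) < lam r) (x : ℕ × ℕ) :
    x ∈ board (delCol (delRow lam r) (lam r)) (ℓ - 1) ↔
      cellUp r (lam r) x ∈ board lam ℓ := by
  obtain ⟨i, c⟩ := x
  simp only [mem_board, cellUp]
  by_cases hi : i < r
  · -- row stays i
    simp only [shUp, if_pos hi]
    constructor
    · rintro ⟨h1, h2, h3, h4⟩
      rw [mu_lt lam r hmono h1 hi] at h4
      have h5 : lam r ≤ lam i := hmono i r h1 (le_of_lt hi)
      split_ifs with hc
      · exact ⟨h1, by omega, h3, by omega⟩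
      · exact ⟨h1, by omega, by omega, by omega⟩
    · rintro ⟨h1, h2, h3, h4⟩
      have h5 : lam r ≤ lam i := hmono i r h1 (le_of_lt hi)
      rw [mu_lt lam r hmono h1 hi]
      split_ifs at h3 h4 with hc
      · exact ⟨h1, by omega, h3, by omega⟩
      · exact ⟨h1, by omega, by omega, by omega⟩
  · -- row becomes i + 1
    push_neg at hi
    simp only [shUp, if_neg (not_lt_of_ge hi)]
    have hlam : lam (i + 1) ≤ lam (r + 1) := hmono (r+1) (i+1) (by omega) (by omega)
    constructor
    · rintro ⟨h1, h2, h3, h4⟩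
      rw [mu_ge lam r hmono hr1 hcorner hi] at h4
      have hc : c < lam r := by omega
      rw [if_pos hc]
      exact ⟨by omega, by omega, h3, h4⟩
    · rintro ⟨h1, h2, h3, h4⟩
      rw [mu_ge lam r hmono hr1 hcorner hi]
      split_ifs at h3 h4 with hc
      · exact ⟨by omega, by omega, h3, h4⟩
      · omega


lemma placements_delCell (hpos : 1 ≤ lam r) (k : ℕ) :
    (placements lam ℓ k).filter (fun p => (r, lam r) ∉ p) =
      placements (delCell lam r) ℓ k := by
  ext p
  simp only [placements, Finset.mem_filter, Finset.mem_powerset,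
    board_delCell lam ℓ r hpos, Finset.subset_erase]
  tauto

lemma rInv_delCell (hmono : ∀ i j, 1 ≤ i → i ≤ j → lam j ≤ lam i) (hpos : 1 ≤ lam r)
    (hr1 : 1 ≤ r) (hrℓ : r ≤ ℓ) (hcorner : lam (r + 1) < lam r)
    {p : Finset (ℕ × ℕ)} (hp : p ⊆ board (delCell lam r) ℓ) :
    rInv lam ℓ p = rInv (delCell lam r) ℓ p + 1 := by
  unfold rInv
  rw [board_delCell lam ℓ r hpos, Finset.filter_erase]
  refine (Finset.card_erase_add_one ?_).symm
  rw [Finset.mem_filter]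
  refine ⟨mem_board.mpr ⟨hr1, hrℓ, hpos, le_refl _⟩, ?_, ?_, ?_⟩
  · intro hmem
    have := hp hmem
    rw [board_delCell lam ℓ r hpos] at this
    exact (Finset.mem_erase.mp this).1 rfl
  · intro a ha hae
    have := mem_board.mp (hp ha)
    rw [hae] at this
    simp only [delCell, if_true] at this
    omega
  · intro a ha hae
    have hb := mem_board.mp (hp ha)
    by_contra hcon
    push_neg at hcon
    rcases Nat.lt_or_ge r a.1 with h | h
    · have h2 : lam a.1 ≤ lam (r + 1) := hmono (r+1) a.1 (by omega) (by omega)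
      have h3 : delCell lam r a.1 = lam a.1 := by
        simp only [delCell]; rw [if_neg (by omega)]
      omega
    · have : a.1 = r := by omega
      rw [this] at hb
      simp only [delCell, if_true] at hb
      omega


lemma mem_placements {lam : ℕ → ℕ} {ℓ k : ℕ} {p : Finset (ℕ × ℕ)} :
    p ∈ placements lam ℓ k ↔ p ⊆ board lam ℓ ∧ p.card = k ∧
      ∀ a ∈ p, ∀ b ∈ p, a ≠ b → a.1 ≠ b.1 ∧ a.2 ≠ b.2 := by
  simp [placements, Finset.mem_filter, Finset.mem_powerset, and_assoc]

lemma erase_comp {k : ℕ} {p : Finset (ℕ × ℕ)} (hp : p ∈ placements lam ℓ k)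
    (he : (r, lam r) ∈ p) :
    ∀ a ∈ p.erase (r, lam r), a.1 ≠ r ∧ a.2 ≠ lam r := by
  intro a ha
  obtain ⟨hane, hap⟩ := Finset.mem_erase.mp ha
  exact (mem_placements.mp hp).2.2 a hap (r, lam r) he hane

lemma mem_cellDown_image {s : Finset (ℕ × ℕ)}
    (hcomp : ∀ a ∈ s, a.1 ≠ r ∧ a.2 ≠ lam r) (y : ℕ × ℕ) :
    y ∈ s.image (cellDown r (lam r)) ↔ cellUp r (lam r) y ∈ s := by
  simp only [Finset.mem_image]
  constructor
  · rintro ⟨a, ha, rfl⟩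
    rwa [cellUp_cellDown (hcomp a ha).1 (hcomp a ha).2]
  · intro h
    exact ⟨cellUp r (lam r) y, h, cellDown_cellUp r (lam r) y⟩

lemma counted_ne {k : ℕ} {p : Finset (ℕ × ℕ)} (hmono : ∀ i j, 1 ≤ i → i ≤ j → lam j ≤ lam i)
    (hcorner : lam (r + 1) < lam r)
    (hp : p ∈ placements lam ℓ k) (he : (r, lam r) ∈ p) {a : ℕ × ℕ}
    (ha : a ∈ (board lam ℓ).filter (fun c => c ∉ p ∧
      (∀ x ∈ p, x.1 = c.1 → x.2 < c.2) ∧ (∀ x ∈ p, x.2 = c.2 → x.1 < c.1))) :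
    a.1 ≠ r ∧ a.2 ≠ lam r := by
  obtain ⟨hab, _, hrow, hcol⟩ := Finset.mem_filter.mp ha
  have hb := mem_board.mp hab
  constructor
  · intro h
    have := hrow (r, lam r) he h.symm
    simp only at this
    rw [h] at hb
    omega
  · intro h
    have hlt := hcol (r, lam r) he h.symm
    simp only at hlt
    have : lam a.1 ≤ lam (r + 1) := hmono (r+1) a.1 (by omega) (by omega)
    omega

lemma rInv_contract (hmono : ∀ i j, 1 ≤ i → i ≤ j → lam j ≤ lam i) (hpos : 1 ≤ lam r)
    (hr1 : 1 ≤ r) (hrℓ : r ≤ ℓ) (hcorner : lam (r + 1) < lam r)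
    {k : ℕ} {p : Finset (ℕ × ℕ)} (hp : p ∈ placements lam ℓ k)
    (he : (r, lam r) ∈ p) :
    rInv lam ℓ p =
      rInv (delCol (delRow lam r) (lam r)) (ℓ - 1)
        ((p.erase (r, lam r)).image (cellDown r (lam r))) := by
  have hcomp := erase_comp lam ℓ r hp he
  set μ := delCol (delRow lam r) (lam r) with hμ
  set Φ := (p.erase (r, lam r)).image (cellDown r (lam r)) with hΦ
  -- key pointwise equivalence
  have keyG : ∀ y : ℕ × ℕ,
      y ∈ (board μ (ℓ - 1)).filter (fun c => c ∉ Φ ∧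
        (∀ x ∈ Φ, x.1 = c.1 → x.2 < c.2) ∧ (∀ x ∈ Φ, x.2 = c.2 → x.1 < c.1)) ↔
      cellUp r (lam r) y ∈ (board lam ℓ).filter (fun c => c ∉ p ∧
        (∀ x ∈ p, x.1 = c.1 → x.2 < c.2) ∧ (∀ x ∈ p, x.2 = c.2 → x.1 < c.1)) := by
    intro y
    have hUne : cellUp r (lam r) y ≠ (r, lam r) := by
      intro h
      exact shUp_ne r y.1 (congrArg Prod.fst h)
    simp only [Finset.mem_filter]
    have hb : y ∈ board μ (ℓ - 1) ↔ cellUp r (lam r) y ∈ board lam ℓ :=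
      mem_board_mu lam ℓ r hmono hr1 hrℓ hcorner y
    have h1 : y ∉ Φ ↔ cellUp r (lam r) y ∉ p := by
      rw [hΦ, mem_cellDown_image lam r hcomp y, Finset.mem_erase]
      simp [hUne]
    have h2 : (∀ x ∈ Φ, x.1 = y.1 → x.2 < y.2) ↔
        (∀ a ∈ p, a.1 = (cellUp r (lam r) y).1 → a.2 < (cellUp r (lam r) y).2) := by
      constructor
      · intro H a hap haeq
        have hane : a ≠ (r, lam r) := by
          intro h
          rw [h] at haeq
          exact shUp_ne r y.1 haeq.symm
        have haer : a ∈ p.erase (r, lam r) := Finset.mem_erase.mpr ⟨hane, hap⟩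
        have hmem : cellDown r (lam r) a ∈ Φ := Finset.mem_image_of_mem _ haer
        have hrow : (cellDown r (lam r) a).1 = y.1 := by
          show shDown r a.1 = y.1
          rw [haeq]
          exact shDown_shUp r y.1
        have := H _ hmem hrow
        show a.2 < shUp (lam r) y.2
        rw [← shDown_lt_iff (hcomp a haer).2 (shUp_ne (lam r) y.2)]
        rwa [shDown_shUp]
      · intro H b hbΦ hbeq
        obtain ⟨a, haer, rfl⟩ := Finset.mem_image.mp hbΦ
        have ha1 : a.1 = (cellUp r (lam r) y).1 := by
          show a.1 = shUp r y.1
          rw [← hbeq]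
          exact (shUp_shDown (hcomp a haer).1).symm
        have := H a (Finset.mem_of_mem_erase haer) ha1
        show shDown (lam r) a.2 < y.2
        have h3 : y.2 = shDown (lam r) (shUp (lam r) y.2) := (shDown_shUp _ _).symm
        rw [h3]
        exact (shDown_lt_iff (hcomp a haer).2 (shUp_ne (lam r) y.2)).mpr this
    have h3 : (∀ x ∈ Φ, x.2 = y.2 → x.1 < y.1) ↔
        (∀ a ∈ p, a.2 = (cellUp r (lam r) y).2 → a.1 < (cellUp r (lam r) y).1) := by
      constructor
      · intro H a hap haeq
        have hane : a ≠ (r, lam r) := by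
          intro h
          rw [h] at haeq
          exact shUp_ne (lam r) y.2 haeq.symm
        have haer : a ∈ p.erase (r, lam r) := Finset.mem_erase.mpr ⟨hane, hap⟩
        have hmem : cellDown r (lam r) a ∈ Φ := Finset.mem_image_of_mem _ haer
        have hcoleq : (cellDown r (lam r) a).2 = y.2 := by
          show shDown (lam r) a.2 = y.2
          rw [haeq]
          exact shDown_shUp (lam r) y.2
        have := H _ hmem hcoleq
        show a.1 < shUp r y.1
        rw [← shDown_lt_iff (hcomp a haer).1 (shUp_ne r y.1)]
        rwa [shDown_shUp]
      · intro H b hbΦ hbeq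
        obtain ⟨a, haer, rfl⟩ := Finset.mem_image.mp hbΦ
        have ha2 : a.2 = (cellUp r (lam r) y).2 := by
          show a.2 = shUp (lam r) y.2
          rw [← hbeq]
          exact (shUp_shDown (hcomp a haer).2).symm
        have := H a (Finset.mem_of_mem_erase haer) ha2
        show shDown r a.1 < y.1
        have h4 : y.1 = shDown r (shUp r y.1) := (shDown_shUp _ _).symm
        rw [h4]
        exact (shDown_lt_iff (hcomp a haer).1 (shUp_ne r y.1)).mpr this
    rw [hb, h1, h2, h3]
  -- the counted sets correspond under cellUp
  have hset : (board lam ℓ).filter (fun c => c ∉ p ∧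
        (∀ x ∈ p, x.1 = c.1 → x.2 < c.2) ∧ (∀ x ∈ p, x.2 = c.2 → x.1 < c.1)) =
      ((board μ (ℓ - 1)).filter (fun c => c ∉ Φ ∧
        (∀ x ∈ Φ, x.1 = c.1 → x.2 < c.2) ∧
        (∀ x ∈ Φ, x.2 = c.2 → x.1 < c.1))).image (cellUp r (lam r)) := by
    ext a
    constructor
    · intro ha
      have hane := counted_ne lam ℓ r hmono hcorner hp he ha
      have ha' : a = cellUp r (lam r) (cellDown r (lam r) a) :=
        (cellUp_cellDown hane.1 hane.2).symm
      rw [Finset.mem_image]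
      refine ⟨cellDown r (lam r) a, ?_, ha'.symm⟩
      rw [keyG, ← ha']
      exact ha
    · intro ha
      obtain ⟨y, hy, rfl⟩ := Finset.mem_image.mp ha
      exact (keyG y).mp hy
  unfold rInv
  rw [hset, Finset.card_image_of_injective _ (cellUp_injective r (lam r))]

lemma contraction_sum (hmono : ∀ i j, 1 ≤ i → i ≤ j → lam j ≤ lam i) (hpos : 1 ≤ lam r)
    (hr1 : 1 ≤ r) (hrℓ : r ≤ ℓ) (hcorner : lam (r + 1) < lam r)
    (k : ℕ) (hk : 1 ≤ k) :
    ∑ p ∈ (placements lam ℓ k).filter (fun p => (r, lam r) ∈ p), q ^ rInv lam ℓ p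
      = qRook q (delCol (delRow lam r) (lam r)) (ℓ - 1) (k - 1) := by
  unfold qRook
  refine Finset.sum_nbij'
    (fun p => (p.erase (r, lam r)).image (cellDown r (lam r)))
    (fun p' => insert (r, lam r) (p'.image (cellUp r (lam r)))) ?_ ?_ ?_ ?_ ?_
  · -- forward map lands in placements μ (ℓ-1) (k-1)
    intro p hp0
    obtain ⟨hp, he⟩ := Finset.mem_filter.mp hp0
    obtain ⟨hsub, hcard, hatt⟩ := mem_placements.mp hp
    have hcomp := erase_comp lam ℓ r hp he
    refine mem_placements.mpr ⟨?_, ?_, ?_⟩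
    · intro y hy
      rw [mem_cellDown_image lam r hcomp y] at hy
      exact (mem_board_mu lam ℓ r hmono hr1 hrℓ hcorner y).mpr
        (hsub (Finset.mem_of_mem_erase hy))
    · rw [Finset.card_image_of_injOn, Finset.card_erase_of_mem he, hcard]
      intro a ha b hb hab
      rw [← cellUp_cellDown (hcomp a ha).1 (hcomp a ha).2,
        ← cellUp_cellDown (hcomp b hb).1 (hcomp b hb).2, hab]
    · rintro a ha b hb hab
      obtain ⟨x, hx, rfl⟩ := Finset.mem_image.mp ha
      obtain ⟨z, hz, rfl⟩ := Finset.mem_image.mp hb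
      have hxz : x ≠ z := fun h => hab (by rw [h])
      have := hatt x (Finset.mem_of_mem_erase hx) z (Finset.mem_of_mem_erase hz) hxz
      constructor
      · intro h
        apply this.1
        rw [← shUp_shDown (hcomp x hx).1, ← shUp_shDown (hcomp z hz).1]
        exact congrArg (shUp r) h
      · intro h
        apply this.2
        rw [← shUp_shDown (hcomp x hx).2, ← shUp_shDown (hcomp z hz).2]
        exact congrArg (shUp (lam r)) h
  · -- backward map lands in the filtered placements
    intro p' hp'
    obtain ⟨hsub', hcard', hatt'⟩ := mem_placements.mp hp'
    have heni : (r, lam r) ∉ p'.image (cellUp r (lam r)) := by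
      rw [Finset.mem_image]
      rintro ⟨x, hx, hxe⟩
      exact shUp_ne r x.1 (congrArg Prod.fst hxe)
    rw [Finset.mem_filter]
    refine ⟨mem_placements.mpr ⟨?_, ?_, ?_⟩, Finset.mem_insert_self _ _⟩
    · rw [Finset.insert_subset_iff]
      refine ⟨mem_board.mpr ⟨hr1, hrℓ, hpos, le_refl _⟩, ?_⟩
      intro y hy
      obtain ⟨x, hx, rfl⟩ := Finset.mem_image.mp hy
      exact (mem_board_mu lam ℓ r hmono hr1 hrℓ hcorner x).mp (hsub' hx)
    · rw [Finset.card_insert_of_notMem heni,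
        Finset.card_image_of_injective _ (cellUp_injective r (lam r)), hcard']
      omega
    · intro a ha b hb hab
      rcases Finset.mem_insert.mp ha with rfl | ha' <;>
        rcases Finset.mem_insert.mp hb with rfl | hb'
      · exact absurd rfl hab
      · obtain ⟨x, hx, rfl⟩ := Finset.mem_image.mp hb'
        exact ⟨fun h => shUp_ne r x.1 h.symm, fun h => shUp_ne (lam r) x.2 h.symm⟩
      · obtain ⟨x, hx, rfl⟩ := Finset.mem_image.mp ha'
        exact ⟨fun h => shUp_ne r x.1 h, fun h => shUp_ne (lam r) x.2 h⟩
      · obtain ⟨x, hx, rfl⟩ := Finset.mem_image.mp ha'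
        obtain ⟨z, hz, rfl⟩ := Finset.mem_image.mp hb'
        have hxz : x ≠ z := fun h => hab (by rw [h])
        have := hatt' x hx z hz hxz
        exact ⟨fun h => this.1 (shUp_inj h), fun h => this.2 (shUp_inj h)⟩
  · -- left inverse
    intro p hp0
    obtain ⟨hp, he⟩ := Finset.mem_filter.mp hp0
    have hcomp := erase_comp lam ℓ r hp he
    show insert (r, lam r) (((p.erase (r, lam r)).image (cellDown r (lam r))).image
      (cellUp r (lam r))) = p
    rw [Finset.image_image]
    have : (p.erase (r, lam r)).image (cellUp r (lam r) ∘ cellDown r (lam r)) =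
        p.erase (r, lam r) := by
      rw [show (p.erase (r, lam r)).image (cellUp r (lam r) ∘ cellDown r (lam r)) =
          (p.erase (r, lam r)).image id from Finset.image_congr
            (fun a ha => cellUp_cellDown (hcomp a ha).1 (hcomp a ha).2),
        Finset.image_id]
    rw [this, Finset.insert_erase he]
  · -- right inverse
    intro p' hp'
    have heni : (r, lam r) ∉ p'.image (cellUp r (lam r)) := by
      rw [Finset.mem_image]
      rintro ⟨x, hx, hxe⟩
      exact shUp_ne r x.1 (congrArg Prod.fst hxe)
    show ((insert (r, lam r) (p'.image (cellUp r (lam r)))).erase (r, lam r)).image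
      (cellDown r (lam r)) = p'
    rw [Finset.erase_insert heni, Finset.image_image]
    rw [show p'.image (cellDown r (lam r) ∘ cellUp r (lam r)) = p'.image id from
      Finset.image_congr (fun a _ => cellDown_cellUp r (lam r) a), Finset.image_id]
  · -- the statistic is preserved
    intro p hp0
    obtain ⟨hp, he⟩ := Finset.mem_filter.mp hp0
    rw [rInv_contract lam ℓ r hmono hpos hr1 hrℓ hcorner hp he]

/-- Deletion–contraction for the `q`-rook numbers. -/
lemma rook_dc (hmono : ∀ i j, 1 ≤ i → i ≤ j → lam j ≤ lam i) (hpos : 1 ≤ lam r)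
    (hr1 : 1 ≤ r) (hrℓ : r ≤ ℓ) (hcorner : lam (r + 1) < lam r) (k : ℕ) :
    qRook q lam ℓ k = q * qRook q (delCell lam r) ℓ k +
      (if 1 ≤ k then qRook q (delCol (delRow lam r) (lam r)) (ℓ - 1) (k - 1) else 0) := by
  have hsplit : qRook q lam ℓ k =
      (∑ p ∈ (placements lam ℓ k).filter (fun p => (r, lam r) ∉ p), q ^ rInv lam ℓ p) +
      ∑ p ∈ (placements lam ℓ k).filter (fun p => (r, lam r) ∈ p), q ^ rInv lam ℓ p := by
    unfold qRook
    rw [← Finset.sum_filter_add_sum_filter_not (placements lam ℓ k)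
      (fun p => (r, lam r) ∈ p)]
    ring
  rw [hsplit]
  congr 1
  · -- deletion part
    rw [placements_delCell lam ℓ r hpos k]
    unfold qRook
    rw [Finset.mul_sum]
    apply Finset.sum_congr rfl
    intro p hp
    have hsub : p ⊆ board (delCell lam r) ℓ := by
      have := (mem_placements.mp hp).1
      exact this
    rw [rInv_delCell lam ℓ r hmono hpos hr1 hrℓ hcorner hsub, pow_succ, mul_comm]
  · -- contraction part
    by_cases hk : 1 ≤ k
    · rw [if_pos hk]
      exact contraction_sum q lam ℓ r hmono hpos hr1 hrℓ hcorner k hk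
    · rw [if_neg hk]
      have hk0 : k = 0 := by omega
      subst hk0
      rw [Finset.sum_eq_zero]
      intro p hp
      obtain ⟨hpp, hep⟩ := Finset.mem_filter.mp hp
      have hcard := (mem_placements.mp hpp).2.1
      rw [Finset.card_eq_zero] at hcard
      subst hcard
      exact absurd hep (Finset.notMem_empty _)


lemma pSize_delCell (hpos : 1 ≤ lam r) (hr1 : 1 ≤ r) (hrℓ : r ≤ ℓ) :
    pSize (delCell lam r) ℓ + 1 = pSize lam ℓ := by
  unfold pSize
  have hrmem : r ∈ Finset.Icc 1 ℓ := Finset.mem_Icc.mpr ⟨hr1, hrℓ⟩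
  rw [← Finset.add_sum_erase _ lam hrmem, ← Finset.add_sum_erase _ (delCell lam r) hrmem]
  have h1 : ∑ i ∈ (Finset.Icc 1 ℓ).erase r, delCell lam r i =
      ∑ i ∈ (Finset.Icc 1 ℓ).erase r, lam i := by
    apply Finset.sum_congr rfl
    intro i hi
    have : i ≠ r := (Finset.mem_erase.mp hi).1
    simp [delCell, this]
  rw [h1]
  have : delCell lam r r = lam r - 1 := by simp [delCell]
  rw [this]
  omega

lemma qBinom_zero (hq0 : q ≠ 0) (hq1 : ∀ j : ℕ, 0 < j → q ^ j ≠ 1) (a : ℕ) :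
    qBinom q a 0 = 1 := by
  unfold qBinom
  rw [qFact_zero, Nat.sub_zero, one_mul, div_self (qFact_ne_zero q hq0 hq1 a)]

lemma choose_two_succ (i : ℕ) : (i+1).choose 2 = i.choose 2 + i := by
  rw [Nat.choose_succ_succ, Nat.choose_one_right, Nat.add_comm]

end RookDC



section HitTerm

set_option maxHeartbeats 2000000 in
/-- Single-term identity underlying the deletion–contraction of `q`-hit numbers. -/
lemma hit_term (q : K) (hq0 : q ≠ 0) (hq1 : ∀ j : ℕ, 0 < j → q ^ j ≠ 1)
    (m n j i : ℕ) (hm : 1 ≤ m) (hn : 1 ≤ n) (Sl Sm : ℤ) (R : K)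
    (hi1 : j - 1 ≤ i) (hi2 : i ≤ n - 1) :
    q ^ ((j.choose 2 : ℤ) - Sl) / qFact q (m - n) *
      (R * (qFact q (m - (i+1)) * qBinom q (i+1) j * (-1 : K) ^ ((i+1) + j) *
        q ^ ((m : ℤ) * ((i : ℤ) + 1) - (((i+1).choose 2 : ℤ))))) =
    q ^ (Sm - Sl + (j : ℤ) + (m : ℤ) - 1) *
      ((if 1 ≤ j then
          q ^ (((j-1).choose 2 : ℤ) - Sm) / qFact q (m - n) *
            (R * qFact q (m - 1 - i) * qBinom q i (j-1) * (-1 : K) ^ (i + (j-1)) *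
              q ^ (((m : ℤ) - 1) * (i : ℤ) - ((i.choose 2 : ℤ))))
        else 0)
       - q * (q ^ ((j.choose 2 : ℤ) - Sm) / qFact q (m - n) *
            (if j ≤ i then R * qFact q (m - 1 - i) * qBinom q i j * (-1 : K) ^ (i + j) *
              q ^ (((m : ℤ) - 1) * (i : ℤ) - ((i.choose 2 : ℤ))) else 0))) := by
  have hF : m - (i + 1) = m - 1 - i := by omega
  have hch : (((i+1).choose 2 : ℕ) : ℤ) = (i.choose 2 : ℤ) + i := by
    rw [choose_two_succ]; push_cast; ring
  have hFmn : qFact q (m - n) ≠ 0 := qFact_ne_zero q hq0 hq1 (m - n)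
  rw [hF, hch]
  have hmi : (m:ℤ) * ((i:ℤ)+1) - ((i.choose 2:ℤ) + i)
      = ((m:ℤ)*(i:ℤ)) + (m:ℤ) - (i.choose 2:ℤ) - (i:ℤ) := by ring
  have hmi' : ((m:ℤ)-1) * (i:ℤ) - (i.choose 2:ℤ)
      = ((m:ℤ)*(i:ℤ)) - (i.choose 2:ℤ) - (i:ℤ) := by ring
  rcases Nat.eq_zero_or_pos j with hj0 | hj1
  · -- j = 0
    subst hj0
    rw [if_neg (by omega), if_pos (by omega)]
    rw [qBinom_zero q hq0 hq1, qBinom_zero q hq0 hq1]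
    have hs : ((-1 : K)) ^ ((i+1) + 0) = -(-1 : K) ^ (i + 0) := by
      rw [show (i+1) + 0 = (i+0) + 1 by omega, pow_succ]; ring
    rw [hs, hmi, hmi']
    rw [show ((0:ℕ).choose 2 : ℤ) = 0 by norm_num]
    simp only [zpow_add₀ hq0, zpow_sub₀ hq0, zpow_natCast, zpow_zero, zpow_one,
      Nat.cast_zero]
    have h1 : q ^ Sl ≠ 0 := zpow_ne_zero _ hq0
    have h2 : q ^ Sm ≠ 0 := zpow_ne_zero _ hq0
    have h3 : q ^ ((m:ℤ) * (i:ℤ)) ≠ 0 := zpow_ne_zero _ hq0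
    field_simp
    try rw [eq_div_iff (by simp [hq0, hFmn, h1, h2, h3, pow_eq_zero_iff])]
    try rw [div_eq_iff (by simp [hq0, hFmn, h1, h2, h3, pow_eq_zero_iff])]
    ring
  · -- j ≥ 1
    have hj1' : 1 ≤ j := hj1
    rw [if_pos hj1']
    have hsgn : ((-1 : K)) ^ (i + (j-1)) = -(-1 : K) ^ (i + j) := by
      rw [show i + j = (i + (j-1)) + 1 by omega, pow_succ]; ring
    have hchj : ((j.choose 2 : ℕ) : ℤ) = ((j-1).choose 2 : ℤ) + ((j : ℤ) - 1) := by
      obtain ⟨j', rfl⟩ := Nat.exists_eq_add_of_le hj1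
      rw [show 1 + j' - 1 = j' by omega, show 1 + j' = j' + 1 by omega, choose_two_succ]
      push_cast; ring
    rcases Nat.lt_or_ge i j with hij | hij
    · -- i = j - 1 : boundary term
      have hij' : i = j - 1 := by omega
      rw [if_neg (by omega)]
      have hi1j : i + 1 = j := by omega
      rw [hi1j]
      rw [qBinom_self q hq0 hq1 j, show qBinom q i (j-1) = 1 from by
        rw [hij']; exact qBinom_self q hq0 hq1 (j-1)]
      rw [show ((-1:K)) ^ (j + j) = 1 from by
        rw [show j + j = 2 * j by omega, pow_mul]; norm_num]
      rw [hsgn, show ((-1:K)) ^ (i + j) = -1 from by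
        rw [show i + j = 2*j - 1 by omega, show 2*j-1 = 2*(j-1)+1 by omega,
          pow_succ, pow_mul]; norm_num]
      rw [hmi, hmi', hchj]
      simp only [zpow_add₀ hq0, zpow_sub₀ hq0, zpow_natCast, zpow_zero, zpow_one,
        Nat.cast_zero]
      have h1 : q ^ Sl ≠ 0 := zpow_ne_zero _ hq0
      have h2 : q ^ Sm ≠ 0 := zpow_ne_zero _ hq0
      have h3 : q ^ ((m:ℤ) * (i:ℤ)) ≠ 0 := zpow_ne_zero _ hq0
      have h4 : q ^ (((j-1).choose 2 : ℕ) : ℤ) ≠ 0 := zpow_ne_zero _ hq0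
      field_simp
      try rw [eq_div_iff (by simp [hq0, hFmn, h1, h2, h3, h4, pow_eq_zero_iff])]
      try rw [div_eq_iff (by simp [hq0, hFmn, h1, h2, h3, h4, pow_eq_zero_iff])]
      rw [show (i : ℤ) = (j : ℤ) - 1 from by omega]
      ring
    · -- i ≥ j : Pascal
      rw [if_pos hij]
      rw [qBinom_pascal q hq0 hq1 i j hj1' hij]
      have hs1 : ((-1 : K)) ^ ((i+1) + j) = -(-1 : K) ^ (i + j) := by
        rw [show (i+1) + j = (i+j) + 1 by omega, pow_succ]; ring
      rw [hs1, hsgn, hmi, hmi', hchj]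
      simp only [zpow_add₀ hq0, zpow_sub₀ hq0, zpow_natCast, zpow_zero, zpow_one,
        Nat.cast_zero]
      have h1 : q ^ Sl ≠ 0 := zpow_ne_zero _ hq0
      have h2 : q ^ Sm ≠ 0 := zpow_ne_zero _ hq0
      have h3 : q ^ ((m:ℤ) * (i:ℤ)) ≠ 0 := zpow_ne_zero _ hq0
      have h4 : q ^ (((j-1).choose 2 : ℕ) : ℤ) ≠ 0 := zpow_ne_zero _ hq0
      field_simp
      try rw [eq_div_iff (by simp [hq0, hFmn, h1, h2, h3, h4, pow_eq_zero_iff])]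
      try rw [div_eq_iff (by simp [hq0, hFmn, h1, h2, h3, h4, pow_eq_zero_iff])]
      ring


lemma reindex_sum (f g : ℕ → K) (j n : ℕ) (hn : 1 ≤ n) :
    ∑ i ∈ Finset.Icc j n, (if 1 ≤ i then g (i-1) else 0) * f i
      = ∑ i ∈ Finset.Icc (j-1) (n-1), g i * f (i+1) := by
  have hsub : Finset.Icc (max j 1) n ⊆ Finset.Icc j n := by
    intro x hx
    simp only [Finset.mem_Icc] at *
    omega
  rw [← Finset.sum_subset hsub (fun x hx hnx => ?_)]
  · refine Finset.sum_nbij' (fun x => x - 1) (fun x => x + 1) ?_ ?_ ?_ ?_ ?_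
    · intro a ha
      simp only [Finset.mem_Icc] at *
      omega
    · intro a ha
      simp only [Finset.mem_Icc] at *
      omega
    · intro a ha
      simp only [Finset.mem_Icc] at ha
      show a - 1 + 1 = a
      omega
    · intro a ha
      show a + 1 - 1 = a
      omega
    · intro a ha
      simp only [Finset.mem_Icc] at ha
      rw [if_pos (by omega : 1 ≤ a), Nat.sub_add_cancel (by omega : 1 ≤ a)]
  · simp only [Finset.mem_Icc] at hx hnx
    rw [if_neg (by omega), zero_mul]

end HitTerm


/-- Deletion-contraction for the `q`-hit numbers: if `e` is the corner cell of
`λ` in row `r`, then `H_j^{m,n}(λ) = H_j^{m,n}(λ∖e)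
  + q^{|λ/e|-|λ|+j+m-1}(H_{j-1}^{m-1,n-1}(λ/e) - q H_j^{m-1,n-1}(λ/e))`,
with the convention `H_{-1} = 0`. -/
theorem stmt18 (q : K) (hq0 : q ≠ 0) (hq1 : ∀ j : ℕ, 0 < j → q ^ j ≠ 1)
    (m n ℓ r : ℕ) (lam : ℕ → ℕ) (hnm : n ≤ m) (hn : 1 ≤ n) (hm : 1 ≤ m)
    (hpart : IsPartitionIn lam ℓ n m) (hr1 : 1 ≤ r) (hrℓ : r ≤ ℓ)
    (hcorner : lam (r + 1) < lam r) (j : ℕ) :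
    qHit q m n lam ℓ j =
      qHit q m n (delCell lam r) ℓ j +
        q ^ ((pSize (delCol (delRow lam r) (lam r)) (ℓ - 1) : ℤ) -
              (pSize lam ℓ : ℤ) + j + m - 1) *
          ((if 1 ≤ j then qHit q (m - 1) (n - 1) (delCol (delRow lam r) (lam r)) (ℓ - 1) (j - 1)
            else 0) -
            q * qHit q (m - 1) (n - 1) (delCol (delRow lam r) (lam r)) (ℓ - 1) j) := by
  obtain ⟨⟨hmono, hzero, hposs⟩, hℓn, hlam1⟩ := hpart
  have hpos : 1 ≤ lam r := hposs r hr1 hrℓ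
  have hSnat := pSize_delCell lam ℓ r hpos hr1 hrℓ
  simp only [qHit]
  rw [show m - 1 - (n - 1) = m - n from by omega]
  simp only [show ((m - 1 : ℕ) : ℤ) = (m : ℤ) - 1 from by omega]
  -- Step 1: deletion–contraction on the rook numbers plus reindexing
  have key1 : (∑ i ∈ Finset.Icc j n, qRook q lam ℓ i * qFact q (m - i) * qBinom q i j *
        (-1 : K) ^ (i + j) * q ^ ((m : ℤ) * (i : ℤ) - (i.choose 2 : ℤ)))
      = q * (∑ i ∈ Finset.Icc j n, qRook q (delCell lam r) ℓ i * qFact q (m - i) *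
          qBinom q i j * (-1 : K) ^ (i + j) * q ^ ((m : ℤ) * (i : ℤ) - (i.choose 2 : ℤ)))
        + ∑ i ∈ Finset.Icc (j - 1) (n - 1),
            qRook q (delCol (delRow lam r) (lam r)) (ℓ - 1) i *
              (qFact q (m - (i + 1)) * qBinom q (i + 1) j * (-1 : K) ^ ((i + 1) + j) *
                q ^ ((m : ℤ) * (((i + 1) : ℕ) : ℤ) - (((i + 1).choose 2 : ℕ) : ℤ))) := by
    rw [← reindex_sum
      (fun i => qFact q (m - i) * qBinom q i j * (-1 : K) ^ (i + j) *
        q ^ ((m : ℤ) * (i : ℤ) - (i.choose 2 : ℤ)))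
      (qRook q (delCol (delRow lam r) (lam r)) (ℓ - 1)) j n hn]
    rw [Finset.mul_sum, ← Finset.sum_add_distrib]
    refine Finset.sum_congr rfl fun i hi => ?_
    rw [rook_dc q lam ℓ r hmono hpos hr1 hrℓ hcorner i]
    ring
  -- Step 2: per-term identity
  have key2 : ∀ i ∈ Finset.Icc (j - 1) (n - 1),
      q ^ ((j.choose 2 : ℤ) - (pSize lam ℓ : ℤ)) / qFact q (m - n) *
        (qRook q (delCol (delRow lam r) (lam r)) (ℓ - 1) i *
          (qFact q (m - (i + 1)) * qBinom q (i + 1) j * (-1 : K) ^ ((i + 1) + j) *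
            q ^ ((m : ℤ) * (((i + 1) : ℕ) : ℤ) - (((i + 1).choose 2 : ℕ) : ℤ))))
      = q ^ ((pSize (delCol (delRow lam r) (lam r)) (ℓ - 1) : ℤ) - (pSize lam ℓ : ℤ) +
            (j : ℤ) + (m : ℤ) - 1) *
          ((if 1 ≤ j then
              q ^ (((j - 1).choose 2 : ℤ) - (pSize (delCol (delRow lam r) (lam r)) (ℓ - 1) : ℤ)) /
                  qFact q (m - n) *
                (qRook q (delCol (delRow lam r) (lam r)) (ℓ - 1) i * qFact q (m - 1 - i) *
                  qBinom q i (j - 1) * (-1 : K) ^ (i + (j - 1)) *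
                  q ^ (((m : ℤ) - 1) * (i : ℤ) - (i.choose 2 : ℤ)))
            else 0)
           - q * (q ^ ((j.choose 2 : ℤ) - (pSize (delCol (delRow lam r) (lam r)) (ℓ - 1) : ℤ)) /
                  qFact q (m - n) *
                (if j ≤ i then
                  qRook q (delCol (delRow lam r) (lam r)) (ℓ - 1) i * qFact q (m - 1 - i) *
                    qBinom q i j * (-1 : K) ^ (i + j) *
                    q ^ (((m : ℤ) - 1) * (i : ℤ) - (i.choose 2 : ℤ))
                 else 0))) := by
    intro i hi
    simp only [Finset.mem_Icc] at hi
    rw [show ((((i + 1) : ℕ)) : ℤ) = (i : ℤ) + 1 from by push_cast; ring]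
    exact hit_term q hq0 hq1 m n j i hm hn (pSize lam ℓ : ℤ)
      (pSize (delCol (delRow lam r) (lam r)) (ℓ - 1) : ℤ)
      (qRook q (delCol (delRow lam r) (lam r)) (ℓ - 1) i) hi.1 hi.2
  rw [key1, mul_add]
  congr 1
  · -- deletion part
    rw [← mul_assoc]
    congr 1
    rw [div_mul_eq_mul_div,
      show ((pSize (delCell lam r) ℓ : ℕ) : ℤ) = (pSize lam ℓ : ℤ) - 1 from by omega,
      show (j.choose 2 : ℤ) - ((pSize lam ℓ : ℤ) - 1)
        = ((j.choose 2 : ℤ) - (pSize lam ℓ : ℤ)) + 1 from by ring,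
      zpow_add_one₀ hq0]
  · -- contraction part
    rw [Finset.mul_sum, Finset.sum_congr rfl key2, ← Finset.mul_sum]
    congr 1
    rw [Finset.sum_sub_distrib]
    congr 1
    · by_cases hj : 1 ≤ j
      · simp only [if_pos hj]
        rw [← Finset.mul_sum]
      · simp only [if_neg hj]
        exact Finset.sum_const_zero
    · rw [← Finset.mul_sum, ← Finset.mul_sum]
      congr 1
      congr 1
      rw [← Finset.sum_filter]
      congr 1
      ext x
      simp only [Finset.mem_filter, Finset.mem_Icc]
      omega
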